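/- Let γ ∈ Γ be a collection satisfying the bound condition. In the multilayer setting with widths n_0, …, n_L and layers h = (h_1, …, h_L), the number of attained multi signatures satisfies |𝒮_h| ≤ ‖B^{(γ)}_{n_L} M_{n_{L-1}, n_L} ⋯ B^{(γ)}_{n_1} M_{n_0, n_1} e_{n_0+1}‖₁, where e_{n_0+1} ∈ ℝ^{n_0+1} is the standard unit vector with value 1 at index n_0+1 and 0 elsewhere, and ‖·‖₁ is the L1 norm on vectors. -/

import Mathlib

open Matrix

noncomputable def relu {n n' : ℕ} (W : Matrix (Fin n') (Fin n) ℝ) (b : Fin n' → ℝ)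
    (x : Fin n → ℝ) : Fin n' → ℝ :=
  fun i => max 0 (W i ⬝ᵥ x + b i)

noncomputable def sig {n n' : ℕ} (W : Matrix (Fin n') (Fin n) ℝ) (b : Fin n' → ℝ)
    (x : Fin n → ℝ) : Fin n' → Bool :=
  fun i => decide (0 < W i ⬝ᵥ x + b i)

/-- Forward pass through the first `l` layers: `fwd n W b l = h_l ∘ ⋯ ∘ h_1`. -/
noncomputable def fwd (n : ℕ → ℕ) (W : ∀ l : ℕ, Matrix (Fin (n (l + 1))) (Fin (n l)) ℝ)
    (b : ∀ l : ℕ, Fin (n (l + 1)) → ℝ) : (l : ℕ) → (Fin (n 0) → ℝ) → (Fin (n l) → ℝ)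
  | 0 => fun x => x
  | l + 1 => fun x => relu (W l) (b l) (fwd n W b l x)

/-- Multi signature of length `m`:
`msig n W b m x = (S_{h_1}(x), S_{h_2}(h_1(x)), …, S_{h_m}(h_{m-1}∘⋯∘h_1(x)))`. -/
noncomputable def msig (n : ℕ → ℕ) (W : ∀ l : ℕ, Matrix (Fin (n (l + 1))) (Fin (n l)) ℝ)
    (b : ∀ l : ℕ, Fin (n (l + 1)) → ℝ) (m : ℕ) (x : Fin (n 0) → ℝ) :
    ∀ l : Fin m, Fin (n (l.val + 1)) → Bool :=
  fun l => sig (W l.val) (b l.val) (fwd n W b l.val x)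

/-- Number of active units of a binary vector `s`, i.e. `|s|`. -/
def cnt {k : ℕ} (s : Fin k → Bool) : ℕ := (Finset.univ.filter fun j => s j = true).card

/-- `min(n_0, |s_1|, …, |s_i|)` for a length-`i` multi signature `s`. -/
def minAct (n : ℕ → ℕ) (i : ℕ) (s : ∀ l : Fin i, Fin (n (l.val + 1)) → Bool) : ℕ :=
  Finset.univ.fold min (n 0) (fun l : Fin i => cnt (s l))


/-- Tail sum `∑_{j ≥ J} v j` of a histogram. -/
noncomputable def tailSum (v : ℕ → ℕ) (J : ℕ) : ℕ :=
  ∑' j : ℕ, if J ≤ j then v j else 0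

/-- The partial order `≼` on histograms: `v ≼ w` iff all tail sums of `v` are dominated by
those of `w`. -/
def hle (v w : ℕ → ℕ) : Prop := ∀ J : ℕ, tailSum v J ≤ tailSum w J

/-- The histogram `e_i` with a single entry `1` at index `i`. -/
def histE (i : ℕ) : ℕ → ℕ := fun j => if j = i then 1 else 0

/-- The activation histogram `ℋ_{n'}(𝒮)`: entry `j` counts the signatures `s ∈ 𝒮` with
`|s| = j` active units. -/
noncomputable def actHist (n' : ℕ) (S : Set (Fin n' → Bool)) : ℕ → ℕ :=
  fun j => {s ∈ S | cnt s = j}.ncard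

/-- The clipping function `cl_k`: all mass at indices `≥ k` is moved to index `k`. -/
noncomputable def clip (k : ℕ) (v : ℕ → ℕ) : ℕ → ℕ :=
  fun i => if i < k then v i else if i = k then tailSum v k else 0

/-- The bound condition for a collection `γ` (accessed as `γ n' n` for `n ≤ n'`, `n' ≥ 1`):
every `γ n' n` is a histogram in `V` (finitely supported); for every ReLU layer function
`h ∈ RL(n, n')` with `0 ≤ n ≤ n'` the activation histogram of its attained signatures is
dominated by `γ n' n` (for `n = 0` the layer functions are the constants, with activation
histogram `e_0`); and `γ n' n ≼ γ n' m` whenever `n ≤ m ≤ n'`. -/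
def BoundCondition (γ : ℕ → ℕ → ℕ → ℕ) : Prop :=
  (∀ n' n : ℕ, 0 < n' → n ≤ n' → (Function.support (γ n' n)).Finite) ∧
  (∀ n' : ℕ, 0 < n' → hle (histE 0) (γ n' 0)) ∧
  (∀ n n' : ℕ, 0 < n → 0 < n' → n ≤ n' →
    ∀ (W : Matrix (Fin n') (Fin n) ℝ) (b : Fin n' → ℝ),
      hle (actHist n' (Set.range (sig W b))) (γ n' n)) ∧
  (∀ n' n m : ℕ, 0 < n' → n ≤ m → m ≤ n' → hle (γ n' n) (γ n' m))

/-- The transition function `φ^{(γ)}_{n'} : V → V`,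
`v ↦ ∑_{m} v_m · cl_{min(m,n')}(γ_{min(m,n'), n'})`. -/
noncomputable def phi (γ : ℕ → ℕ → ℕ → ℕ) (n' : ℕ) (v : ℕ → ℕ) : ℕ → ℕ :=
  fun i => ∑' m : ℕ, v m * clip (min m n') (γ n' (min m n')) i

/-- The dimension histogram `H̃^{(i)}(U)`: entry `j` counts the length-`i` multi signatures
`(s_1, …, s_i) ∈ U` with `min(n_0, |s_1|, …, |s_i|) = j`. -/
noncomputable def dimHist (n : ℕ → ℕ) (i : ℕ)
    (U : Set (∀ l : Fin i, Fin (n (l.val + 1)) → Bool)) : ℕ → ℕ :=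
  fun j => {u ∈ U | minAct n i u = j}.ncard


/-- The bound matrix `B^{(γ)}_{n'} ∈ ℕ^{(n'+1)×(n'+1)}` (as a real matrix), with
(0-indexed) entries `(B^{(γ)}_{n'})_{i,j} = (cl_j(γ_{j,n'}))_i`. -/
noncomputable def boundMatrix (γ : ℕ → ℕ → ℕ → ℕ) (n' : ℕ) :
    Matrix (Fin (n' + 1)) (Fin (n' + 1)) ℝ :=
  fun i j => (clip j.val (γ n' j.val) i.val : ℕ)

/-- The connector matrix `M_{m,m'} ∈ ℝ^{(m'+1)×(m+1)}`, with (0-indexed) entries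
`(M_{m,m'})_{i,j} = 1` if `i = min(j, m')` and `0` otherwise. -/
def connMatrix (m m' : ℕ) : Matrix (Fin (m' + 1)) (Fin (m + 1)) ℝ :=
  fun i j => if i.val = min j.val m' then 1 else 0

/-- The iterated matrix-vector product
`vecIter γ n l = B^{(γ)}_{n_l} M_{n_{l-1},n_l} ⋯ B^{(γ)}_{n_1} M_{n_0,n_1} e_{n_0+1}`,
starting from the standard unit vector `e_{n_0+1} ∈ ℝ^{n_0+1}` (1 in its last entry). -/
noncomputable def vecIter (γ : ℕ → ℕ → ℕ → ℕ) (n : ℕ → ℕ) :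
    (l : ℕ) → Fin (n l + 1) → ℝ
  | 0 => fun i => if i.val = n 0 then 1 else 0
  | l + 1 => boundMatrix γ (n (l + 1)) *ᵥ (connMatrix (n l) (n (l + 1)) *ᵥ vecIter γ n l)

/-!
Fix the first `l` signatures `u` of a multi signature. On the inputs realising `u` the network
is affine with linear part of rank at most `k = min(n_0, |u_1|, …, |u_l|)`, so the next signature
ranges over the signatures of a ReLU layer with `k` inputs; the bound condition controls how many
of them have at least `J` active units. Summing over `u` and comparing with the previous layer
by Abel summation (the weight `k ↦ tail_J(γ_{min(k,n'),n'})` is monotone) shows by induction on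
`l` that the number of attained multi signatures with minimum at least `J` is at most the `J`-th
tail sum of `B M ⋯ B M e_{n_0+1}`; the theorem is the case `J = 0`.
-/

open Finset
open scoped Classical

lemma tailSum_eq_sum_Ico {v : ℕ → ℕ} {N : ℕ} (hv : ∀ j, N ≤ j → v j = 0) (J : ℕ) :
    tailSum v J = ∑ j ∈ Ico J N, v j := by
  rw [tailSum, tsum_eq_sum (s := Ico J N) fun j hj => ?_]
  · exact sum_congr rfl fun j hj => if_pos (mem_Ico.mp hj).1
  · rw [mem_Ico, not_and_or, not_le, not_lt] at hj
    rcases hj with hj | hj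
    · exact if_neg (by omega)
    · simp [hv j hj]

lemma exists_forall_ge_eq_zero {v : ℕ → ℕ} (hv : (Function.support v).Finite) (k : ℕ) :
    ∃ N, k ≤ N ∧ ∀ j, N ≤ j → v j = 0 := by
  obtain ⟨M, hM⟩ := hv.bddAbove
  refine ⟨max k (M + 1), le_max_left _ _, fun j hj => ?_⟩
  by_contra h
  exact absurd (hM h) (by omega)

lemma clip_eq_zero_of_lt {k j : ℕ} (v : ℕ → ℕ) (h : k < j) : clip k v j = 0 := by
  rw [clip, if_neg (by omega), if_neg (by omega)]

lemma tailSum_clip {v : ℕ → ℕ} (hv : (Function.support v).Finite) (k J : ℕ) :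
    tailSum (clip k v) J = if J ≤ k then tailSum v J else 0 := by
  obtain ⟨N, hkN, hN⟩ := exists_forall_ge_eq_zero hv (k + 1)
  rw [tailSum_eq_sum_Ico fun j hj => clip_eq_zero_of_lt v hj]
  split_ifs with hJ
  · rw [sum_Ico_succ_top hJ, tailSum_eq_sum_Ico hN,
      ← sum_Ico_consecutive _ hJ (by omega : k ≤ N)]
    congr 1
    · exact sum_congr rfl fun j hj => if_pos (mem_Ico.mp hj).2
    · simp [clip, tailSum_eq_sum_Ico hN]
  · exact sum_eq_zero fun j hj => by simp only [mem_Ico] at hj; omega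

lemma cnt_le {k : ℕ} (s : Fin k → Bool) : cnt s ≤ k :=
  (card_filter_le _ _).trans (card_fin k).le

lemma tailSum_actHist {n' : ℕ} (S : Set (Fin n' → Bool)) (J : ℕ) :
    tailSum (actHist n' S) J = #{s | s ∈ S ∧ J ≤ cnt s} := by
  have hvan : ∀ j, n' + 1 ≤ j → actHist n' S j = 0 := fun j hj => by
    rw [actHist, Set.ncard_eq_zero]
    exact Set.eq_empty_of_forall_notMem fun s ⟨_, hs⟩ => by have := cnt_le s; omega
  rw [tailSum_eq_sum_Ico hvan, card_eq_sum_card_fiberwise (f := cnt) (t := Ico J (n' + 1))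
    fun s hs => by have := cnt_le s; simp at hs ⊢; omega]
  refine sum_congr rfl fun j hj => ?_
  rw [actHist, Set.ncard_eq_toFinset_card', Set.toFinset_ofPred, filter_filter]
  congr 1
  ext s
  simp only [mem_filter, mem_univ, true_and, mem_Ico] at hj ⊢
  constructor
  · rintro ⟨hs, rfl⟩; exact ⟨⟨hs, hj.1⟩, rfl⟩
  · rintro ⟨⟨hs, -⟩, h⟩; exact ⟨hs, h⟩

noncomputable def tailSumVec {N : ℕ} (v : Fin N → ℝ) (J : ℕ) : ℝ :=
  ∑ i, if J ≤ i.val then v i else 0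

lemma tailSumVec_natCast {w : ℕ → ℕ} {N : ℕ} (hw : ∀ j, N + 1 ≤ j → w j = 0) (J : ℕ) :
    tailSumVec (fun i : Fin (N + 1) => (w i : ℝ)) J = tailSum w J := by
  rw [tailSum_eq_sum_Ico hw, tailSumVec,
    Fin.sum_univ_eq_sum_range (fun j => if J ≤ j then (w j : ℝ) else 0), ← sum_filter,
    range_eq_Ico, Ico_filter_le, max_eq_right (Nat.zero_le J), Nat.cast_sum]

section LayerCake

variable {β : Type*}

lemma sum_range_succ_increments (g : ℕ → ℝ) (m : ℕ) :
    ∑ J ∈ range (m + 1), (if J = 0 then g 0 else g J - g (J - 1)) = g m := by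
  rw [sum_range_succ', if_pos rfl]
  simp only [Nat.succ_ne_zero, if_false, Nat.add_sub_cancel]
  rw [sum_range_sub]
  ring

lemma sum_comp_mul_eq_sum_increments (t : Finset β) (f : β → ℕ) {N : ℕ}
    (hf : ∀ b ∈ t, f b ≤ N) (w : β → ℝ) (g : ℕ → ℝ) :
    ∑ b ∈ t, g (f b) * w b = ∑ J ∈ range (N + 1),
      (if J = 0 then g 0 else g J - g (J - 1)) * ∑ b ∈ t, if J ≤ f b then w b else 0 := by
  simp_rw [mul_sum]
  rw [sum_comm]
  refine sum_congr rfl fun b hb => ?_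
  have hrange : {J ∈ range (N + 1) | J ≤ f b} = range (f b + 1) := by
    ext J; have := hf b hb; simp only [mem_filter, mem_range]; omega
  rw [← sum_range_succ_increments g (f b), ← hrange, sum_filter, sum_mul]
  exact sum_congr rfl fun J _ => by split_ifs <;> simp

lemma sum_comp_le_sum_mul_of_card_le_tailSumVec {s : Finset β} {f : β → ℕ} {N : ℕ}
    (hf : ∀ a ∈ s, f a ≤ N) {v : Fin (N + 1) → ℝ} {g : ℕ → ℝ} (hg0 : 0 ≤ g 0)
    (hg : Monotone g) (h : ∀ J, (#{a ∈ s | J ≤ f a} : ℝ) ≤ tailSumVec v J) :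
    ∑ a ∈ s, g (f a) ≤ ∑ i, g i.val * v i := by
  have hs := sum_comp_mul_eq_sum_increments s f hf (fun _ => 1) g
  have hv := sum_comp_mul_eq_sum_increments univ (fun i : Fin (N + 1) => i.val)
    (fun i _ => Nat.lt_succ_iff.mp i.isLt) v g
  simp only [mul_one] at hs
  rw [hs, hv]
  gcongr with J
  · split_ifs
    · exact hg0
    · exact sub_nonneg.2 (hg (Nat.sub_le J 1))
  · have hJ := h J
    rw [card_filter, Nat.cast_sum] at hJ
    simp only [Nat.cast_ite, Nat.cast_one, Nat.cast_zero] at hJ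
    exact hJ

end LayerCake

lemma tailSumVec_mulVec {N : ℕ} {ι : Type*} [Fintype ι] (A : Matrix (Fin N) ι ℝ) (v : ι → ℝ)
    (J : ℕ) : tailSumVec (A *ᵥ v) J = ∑ κ, tailSumVec (fun i => A i κ) J * v κ := by
  simp only [tailSumVec, mulVec, dotProduct, sum_mul, ite_mul, zero_mul]
  rw [sum_comm]
  exact sum_congr rfl fun i _ => by split_ifs <;> simp

lemma sum_mul_connMatrix_mulVec {m m' : ℕ} (f : ℕ → ℝ) (v : Fin (m + 1) → ℝ) :
    ∑ κ : Fin (m' + 1), f κ * (connMatrix m m' *ᵥ v) κ = ∑ j, f (min j.val m') * v j := by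
  simp only [mulVec, dotProduct, connMatrix, ite_mul, one_mul, zero_mul, mul_sum]
  rw [sum_comm]
  refine sum_congr rfl fun j _ => ?_
  rw [sum_eq_single ⟨min j m', Nat.lt_succ_of_le (min_le_right _ _)⟩ (fun κ _ hκ => ?_) (by simp)]
  · simp
  · rw [if_neg fun h => hκ (Fin.ext h), mul_zero]

/-- The bound, through `γ`, on the number of signatures with at least `J` active units that a
width-`n'` layer attains on an affine set of dimension at most `k`. -/
noncomputable def extensionBound (γ : ℕ → ℕ → ℕ → ℕ) (n' J k : ℕ) : ℕ :=
  if J ≤ min k n' then tailSum (γ n' (min k n')) J else 0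

lemma tailSumVec_vecIter_succ {γ : ℕ → ℕ → ℕ → ℕ} {n : ℕ → ℕ} {l : ℕ}
    (hγ : ∀ k ≤ n (l + 1), (Function.support (γ (n (l + 1)) k)).Finite) (J : ℕ) :
    tailSumVec (vecIter γ n (l + 1)) J
      = ∑ j, (extensionBound γ (n (l + 1)) J j.val : ℝ) * vecIter γ n l j := by
  have hcol : ∀ κ : Fin (n (l + 1) + 1), tailSumVec (fun i => boundMatrix γ (n (l + 1)) i κ) J
      = ((if J ≤ κ.val then tailSum (γ (n (l + 1)) κ) J else 0 : ℕ) : ℝ) := fun κ => by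
    have hκ := Nat.lt_succ_iff.mp κ.isLt
    show tailSumVec (fun i : Fin _ => ((clip κ (γ (n (l + 1)) κ) i : ℕ) : ℝ)) J = _
    rw [tailSumVec_natCast (w := clip κ (γ (n (l + 1)) κ))
      (fun j hj => clip_eq_zero_of_lt _ (by omega)), tailSum_clip (hγ κ hκ)]
  rw [vecIter, tailSumVec_mulVec]
  simp_rw [hcol]
  exact sum_mul_connMatrix_mulVec
    (fun k => ((if J ≤ k then tailSum (γ (n (l + 1)) k) J else 0 : ℕ) : ℝ)) _

lemma tailSumVec_vecIter_zero (γ : ℕ → ℕ → ℕ → ℕ) (n : ℕ → ℕ) (J : ℕ) :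
    tailSumVec (vecIter γ n 0) J = if J ≤ n 0 then 1 else 0 := by
  rw [tailSumVec, sum_eq_single (Fin.last (n 0)) (fun i _ hi => ?_) (by simp)]
  · simp [vecIter]
  · have hi' : i.val ≠ n 0 := fun h => hi (Fin.ext h)
    simp [vecIter, hi']

abbrev MultiSig (n : ℕ → ℕ) (l : ℕ) : Type := ∀ l' : Fin l, Fin (n (l'.val + 1)) → Bool

lemma minAct_zero (n : ℕ → ℕ) (u : MultiSig n 0) : minAct n 0 u = n 0 := by
  simp [minAct]

lemma minAct_succ (n : ℕ → ℕ) (l : ℕ) (u : MultiSig n (l + 1)) :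
    minAct n (l + 1) u = min (cnt (u (Fin.last l))) (minAct n l (Fin.init u)) := by
  rw [minAct, Fin.univ_castSuccEmb, fold_cons, fold_map]
  rfl

lemma minAct_le (n : ℕ → ℕ) (l : ℕ) (u : MultiSig n l) : minAct n l u ≤ n l := by
  cases l with
  | zero => rw [minAct_zero]
  | succ l => exact (minAct_succ n l u).trans_le ((min_le_left _ _).trans (cnt_le _))

lemma exists_mulVec_eq_of_rank_le {K : Type*} [Field K] {m n : Type*} [Fintype m] [Fintype n]
    (A : Matrix m n K) {k : ℕ} (hA : A.rank ≤ k) :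
    ∃ B : Matrix m (Fin k) K, ∀ x, ∃ y, B *ᵥ y = A *ᵥ x := by
  let R := LinearMap.range A.mulVecLin
  let e := (Module.finBasis K R).equivFun
  let P : (Fin k → K) →ₗ[K] m → K :=
    R.subtype ∘ₗ e.symm.toLinearMap ∘ₗ LinearMap.funLeft K K (Fin.castLE hA)
  refine ⟨LinearMap.toMatrix' P, fun x => ?_⟩
  obtain ⟨y, hy⟩ := LinearMap.funLeft_surjective_of_injective K K _ (Fin.castLE_injective hA)
    (e ⟨A *ᵥ x, x, rfl⟩)
  refine ⟨y, ?_⟩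
  rw [LinearMap.toMatrix'_mulVec]
  change ((e.symm (LinearMap.funLeft K K (Fin.castLE hA) y) : R) : m → K) = A *ᵥ x
  rw [hy, LinearEquiv.symm_apply_apply]

noncomputable def activationMatrix {m : ℕ} (s : Fin m → Bool) : Matrix (Fin m) (Fin m) ℝ :=
  diagonal fun i => if s i then 1 else 0

lemma rank_activationMatrix {m : ℕ} (s : Fin m → Bool) : (activationMatrix s).rank = cnt s := by
  rw [activationMatrix, rank_diagonal, Fintype.card_subtype, cnt]
  congr 1
  ext i
  cases s i <;> simp

lemma relu_eq_activationMatrix_mulVec {m m' : ℕ} (W : Matrix (Fin m') (Fin m) ℝ)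
    (b : Fin m' → ℝ) (y : Fin m → ℝ) :
    relu W b y = activationMatrix (sig W b y) *ᵥ (W *ᵥ y + b) := by
  funext i
  rw [activationMatrix, mulVec_diagonal]
  by_cases h : 0 < W i ⬝ᵥ y + b i
  · simp [relu, sig, h, max_eq_right h.le, mulVec]
  · simp [relu, sig, h, max_eq_left (not_lt.mp h)]

lemma sig_eq_of_mulVec_add_eq {m₁ m₂ m' : ℕ} {W₁ : Matrix (Fin m') (Fin m₁) ℝ}
    {W₂ : Matrix (Fin m') (Fin m₂) ℝ} {b₁ b₂ : Fin m' → ℝ} {y₁ : Fin m₁ → ℝ} {y₂ : Fin m₂ → ℝ}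
    (h : W₁ *ᵥ y₁ + b₁ = W₂ *ᵥ y₂ + b₂) : sig W₁ b₁ y₁ = sig W₂ b₂ y₂ :=
  funext fun i => show decide (0 < (W₁ *ᵥ y₁ + b₁) i) = decide (0 < (W₂ *ᵥ y₂ + b₂) i) by rw [h]

section Network

variable (n : ℕ → ℕ) (W : ∀ l : ℕ, Matrix (Fin (n (l + 1))) (Fin (n l)) ℝ)
  (b : ∀ l : ℕ, Fin (n (l + 1)) → ℝ)

lemma exists_fwd_eq_affine_of_msig_eq (l : ℕ) (u : MultiSig n l) :
    ∃ (M : Matrix (Fin (n l)) (Fin (n 0)) ℝ) (c : Fin (n l) → ℝ),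
      M.rank ≤ minAct n l u ∧ ∀ x, msig n W b l x = u → fwd n W b l x = M *ᵥ x + c := by
  induction l with
  | zero =>
    refine ⟨1, 0, ?_, fun x _ => by simp [fwd]⟩
    rw [minAct_zero]
    exact (rank_le_card_width _).trans_eq (Fintype.card_fin _)
  | succ l ih =>
    obtain ⟨M, c, hrank, hfwd⟩ := ih (Fin.init u)
    let D : Matrix (Fin (n (l + 1))) (Fin (n (l + 1))) ℝ := activationMatrix (u (Fin.last l))
    refine ⟨D * (W l * M), D *ᵥ (W l *ᵥ c + b l), ?_, fun x hx => ?_⟩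
    · rw [minAct_succ, ← rank_activationMatrix]
      exact le_min (rank_mul_le_left _ _)
        (((rank_mul_le_right _ _).trans (rank_mul_le_right _ _)).trans hrank)
    · have hinit : msig n W b l x = Fin.init u := funext fun l' => congrFun hx l'.castSucc
      have hlast : sig (W l) (b l) (fwd n W b l x) = u (Fin.last l) := congrFun hx (Fin.last l)
      show relu (W l) (b l) (fwd n W b l x) = _
      rw [relu_eq_activationMatrix_mulVec, hlast, hfwd x hinit]
      simp only [D, mulVec_add, mulVec_mulVec, add_assoc]

lemma exists_sig_mem_range_of_msig_eq (l : ℕ) (u : MultiSig n l) :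
    ∃ (B : Matrix (Fin (n (l + 1))) (Fin (min (minAct n l u) (n (l + 1)))) ℝ)
      (β : Fin (n (l + 1)) → ℝ),
      ∀ x, msig n W b l x = u → sig (W l) (b l) (fwd n W b l x) ∈ Set.range (sig B β) := by
  obtain ⟨M, c, hrank, hfwd⟩ := exists_fwd_eq_affine_of_msig_eq n W b l u
  obtain ⟨B, hB⟩ := exists_mulVec_eq_of_rank_le (W l * M)
    (le_min ((rank_mul_le_right _ _).trans hrank)
      ((rank_le_card_height _).trans_eq (Fintype.card_fin _)))
  refine ⟨B, W l *ᵥ c + b l, fun x hx => ?_⟩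
  obtain ⟨y, hy⟩ := hB x
  refine ⟨y, sig_eq_of_mulVec_add_eq ?_⟩
  rw [hy, hfwd x hx, mulVec_add, ← mulVec_mulVec, add_assoc]

end Network

section BoundCondition

variable {γ : ℕ → ℕ → ℕ → ℕ} (hγ : BoundCondition γ)
include hγ

-- For `k = 0` the bound condition only gives `e_0 ≼ γ n' 0`, which is why `J ≤ k` is assumed.
lemma card_range_sig_filter_le {n' k J : ℕ} (hn' : 0 < n') (hk : k ≤ n') (hJ : J ≤ k)
    (B : Matrix (Fin n') (Fin k) ℝ) (β : Fin n' → ℝ) :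
    #{s | s ∈ Set.range (sig B β) ∧ J ≤ cnt s} ≤ tailSum (γ n' k) J := by
  by_cases hk0 : k = 0
  · obtain rfl : J = 0 := by omega
    have : IsEmpty (Fin k) := ⟨fun i => absurd i.isLt (by omega)⟩
    refine le_trans (card_le_one.mpr fun s hs t ht => ?_) ?_
    · simp only [mem_filter, mem_univ, true_and] at hs ht
      obtain ⟨⟨x, rfl⟩, -⟩ := hs
      obtain ⟨⟨y, rfl⟩, -⟩ := ht
      rw [Subsingleton.elim x y]
    · calc 1 = tailSum (histE 0) 0 := by
            rw [tailSum_eq_sum_Ico (v := histE 0) (N := 1) fun j hj => if_neg (by omega)]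
            simp [histE]
        _ ≤ tailSum (γ n' k) 0 := hk0 ▸ hγ.2.1 n' hn' 0
  · rw [← tailSum_actHist]
    exact hγ.2.2.1 k n' (Nat.pos_of_ne_zero hk0) hn' hk B β J

lemma monotone_extensionBound {n' : ℕ} (hn' : 0 < n') (J : ℕ) :
    Monotone (extensionBound γ n' J) := by
  intro a a' ha
  have hmin : min a n' ≤ min a' n' := min_le_min_right _ ha
  unfold extensionBound
  split_ifs with h h'
  · exact hγ.2.2.2 n' _ _ hn' hmin (min_le_right _ _) J
  · exact absurd (h.trans hmin) h'
  · exact Nat.zero_le _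
  · exact le_rfl

end BoundCondition

section Counting

variable (n : ℕ → ℕ) (W : ∀ l : ℕ, Matrix (Fin (n (l + 1))) (Fin (n l)) ℝ)
  (b : ∀ l : ℕ, Fin (n (l + 1)) → ℝ)

noncomputable def attainedGE (l J : ℕ) : Finset (MultiSig n l) :=
  {w | w ∈ Set.range (msig n W b l) ∧ J ≤ minAct n l w}

variable {n} {γ : ℕ → ℕ → ℕ → ℕ} (hγ : BoundCondition γ)
include hγ

lemma card_filter_init_attainedGE_le {l : ℕ} (hn' : 0 < n (l + 1)) (u : MultiSig n l) (J : ℕ) :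
    #{w ∈ attainedGE n W b (l + 1) J | Fin.init w = u}
      ≤ extensionBound γ (n (l + 1)) J (minAct n l u) := by
  unfold extensionBound
  split_ifs with hJ
  · obtain ⟨B, β, hB⟩ := exists_sig_mem_range_of_msig_eq n W b l u
    refine (card_le_card_of_injOn (fun w => w (Fin.last l)) (fun w hw => ?_) ?_).trans
      (card_range_sig_filter_le hγ hn' (min_le_right _ _) hJ B β)
    · obtain ⟨⟨⟨x, rfl⟩, hmin⟩, hinit⟩ : (_ ∧ _) ∧ _ := by simpa [attainedGE] using hw
      rw [minAct_succ] at hmin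
      simp only [coe_filter, mem_univ, true_and, Set.mem_ofPred_eq]
      exact ⟨hB x hinit, (le_min_iff.mp hmin).1⟩
    · intro w₁ hw₁ w₂ hw₂ hlast
      rw [← Fin.snoc_init_self w₁, ← Fin.snoc_init_self w₂, (mem_filter.mp hw₁).2,
        (mem_filter.mp hw₂).2]
      exact congrArg _ hlast
  · rw [Nat.le_zero, card_eq_zero, filter_eq_empty_iff]
    rintro w hw rfl
    have hmin := (mem_filter.mp hw).2.2
    rw [minAct_succ] at hmin
    exact hJ (le_min (le_min_iff.mp hmin).2 ((le_min_iff.mp hmin).1.trans (cnt_le _)))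

lemma card_attainedGE_le_tailSumVec (hn : ∀ l, 0 < n (l + 1)) (l J : ℕ) :
    (#(attainedGE n W b l J) : ℝ) ≤ tailSumVec (vecIter γ n l) J := by
  induction l generalizing J with
  | zero =>
    rw [tailSumVec_vecIter_zero]
    split_ifs with hJ
    · exact_mod_cast card_le_one_of_subsingleton _
    · have hempty : attainedGE n W b 0 J = ∅ := filter_eq_empty_iff.mpr fun w _ h =>
        hJ (minAct_zero n w ▸ h.2)
      simp [hempty]
  | succ l ih =>
    have hinit : Set.MapsTo Fin.init (attainedGE n W b (l + 1) J : Set (MultiSig n (l + 1)))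
        (attainedGE n W b l 0 : Set (MultiSig n l)) := fun w hw => by
        obtain ⟨⟨x, rfl⟩, -⟩ := (mem_filter.mp (mem_coe.mp hw)).2
        exact mem_filter.mpr ⟨mem_univ _, ⟨x, rfl⟩, Nat.zero_le _⟩
    have htail : ∀ J', (#{u ∈ attainedGE n W b l 0 | J' ≤ minAct n l u} : ℝ)
        ≤ tailSumVec (vecIter γ n l) J' := fun J' => by
      have hfilter : {u ∈ attainedGE n W b l 0 | J' ≤ minAct n l u} = attainedGE n W b l J' := by
        ext u
        simp [attainedGE]
      exact hfilter ▸ ih J'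
    calc (#(attainedGE n W b (l + 1) J) : ℝ)
        = ∑ u ∈ attainedGE n W b l 0, (#{w ∈ attainedGE n W b (l + 1) J | Fin.init w = u} : ℝ) :=
          by exact_mod_cast card_eq_sum_card_fiberwise hinit
      _ ≤ ∑ u ∈ attainedGE n W b l 0, (extensionBound γ (n (l + 1)) J (minAct n l u) : ℝ) :=
          sum_le_sum fun u _ => by
            exact_mod_cast card_filter_init_attainedGE_le W b hγ (hn l) u J
      _ ≤ ∑ j, (extensionBound γ (n (l + 1)) J j.val : ℝ) * vecIter γ n l j :=
          sum_comp_le_sum_mul_of_card_le_tailSumVec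
            (g := fun k => (extensionBound γ (n (l + 1)) J k : ℝ))
            (fun u _ => minAct_le n l u) (Nat.cast_nonneg _)
            (fun _ _ h => Nat.cast_le.mpr (monotone_extensionBound hγ (hn l) J h)) htail
      _ = tailSumVec (vecIter γ n (l + 1)) J :=
          (tailSumVec_vecIter_succ (fun k hk => hγ.1 _ k (hn l) hk) J).symm

end Counting

theorem stmt15_general (γ : ℕ → ℕ → ℕ → ℕ) (hγ : BoundCondition γ)
    (L : ℕ) (n : ℕ → ℕ) (hn : ∀ l, 0 < n l)
    (W : ∀ l : ℕ, Matrix (Fin (n (l + 1))) (Fin (n l)) ℝ)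
    (b : ∀ l : ℕ, Fin (n (l + 1)) → ℝ) :
    ((Set.range (msig n W b L)).ncard : ℝ) ≤ ∑ i, |vecIter γ n L i| := by
  have hcard : (Set.range (msig n W b L)).ncard = #(attainedGE n W b L 0) := by
    rw [Set.ncard_eq_toFinset_card']
    congr 1
    ext w
    simp [attainedGE]
  calc ((Set.range (msig n W b L)).ncard : ℝ)
      = #(attainedGE n W b L 0) := by rw [hcard]
    _ ≤ tailSumVec (vecIter γ n L) 0 :=
      card_attainedGE_le_tailSumVec W b hγ (fun l => hn (l + 1)) L 0
    _ ≤ ∑ i, |vecIter γ n L i| :=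
      sum_le_sum fun i _ => (if_pos (Nat.zero_le _)).trans_le (le_abs_self _)

/-- Let `γ ∈ Γ` satisfy the bound condition. In the multilayer setting with widths
`n 0, …, n L`, the number of attained multi signatures satisfies
`|𝒮_h| ≤ ‖B^{(γ)}_{n_L} M_{n_{L-1},n_L} ⋯ B^{(γ)}_{n_1} M_{n_0,n_1} e_{n_0+1}‖₁`. -/
theorem stmt15 (γ : ℕ → ℕ → ℕ → ℕ) (hγ : BoundCondition γ)
    (L : ℕ) (hL : 0 < L) (n : ℕ → ℕ) (hn : ∀ l, 0 < n l)
    (W : ∀ l : ℕ, Matrix (Fin (n (l + 1))) (Fin (n l)) ℝ)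
    (b : ∀ l : ℕ, Fin (n (l + 1)) → ℝ) :
    ((Set.range (msig n W b L)).ncard : ℝ) ≤ ∑ i, |vecIter γ n L i| :=
  stmt15_general γ hγ L n hn W b
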